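/- Let m_X, m_Y, Ω_X, Ω_Y, α, γ̄, C > 0 be real numbers, set θ = m_YΩ_X/(m_YΩ_X + m_XΩ_Y) and δ = m_XΩ_Y/(m_YΩ_X + m_XΩ_Y), and let f be the α-Beaulieu-Xie shadowed SNR probability density with normalizing constant C. Then for every real k ≥ 0, ∫₀^∞ γ^k f(γ) dγ = γ̄^k · C^{2k/α} · (Γ(m_X + 2k/α)/Γ(m_X)) · θ^{m_Y} · ₂F₁(m_Y, m_X + 2k/α; m_X; δ), where the ₂F₁ series converges since 0 ≤ δ < 1. -/

import Mathlib

open Real MeasureTheory Set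

/-- Pochhammer symbol `(q)_n = q (q+1) ⋯ (q+n-1)`, with `(q)_0 = 1`. -/
noncomputable def poch (q : ℝ) (n : ℕ) : ℝ := ∏ i ∈ Finset.range n, (q + i)

/-- Confluent (Kummer) hypergeometric function `₁F₁(a; b; z)`. -/
noncomputable def oneF1 (a b z : ℝ) : ℝ :=
  ∑' n : ℕ, (poch a n / poch b n) * z ^ n / (n.factorial : ℝ)

/-- Gauss hypergeometric function `₂F₁(a, b; c; z)`. -/
noncomputable def twoF1 (a b c z : ℝ) : ℝ :=
  ∑' n : ℕ, (poch a n * poch b n / poch c n) * z ^ n / (n.factorial : ℝ)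

/-- Confluent Appell (Humbert) function `Φ₂(b₁, b₂; c; x, y)`. -/
noncomputable def Phi2 (b₁ b₂ c x y : ℝ) : ℝ :=
  ∑' p : ℕ × ℕ, (poch b₁ p.1 * poch b₂ p.2 / poch c (p.1 + p.2)) *
    x ^ p.1 * y ^ p.2 / ((p.1.factorial : ℝ) * (p.2.factorial : ℝ))

/-- The α-Beaulieu-Xie shadowed SNR probability density with parameters
`mX, mY, ΩX, ΩY, α`, average SNR `γbar` and normalizing constant `C`, where
`θ = mY ΩX / (mY ΩX + mX ΩY)` and `δ = mX ΩY / (mY ΩX + mX ΩY)`. -/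
noncomputable def aBXpdf (mX mY ΩX ΩY α γbar C γ : ℝ) : ℝ :=
  (α * (mY * ΩX / (mY * ΩX + mX * ΩY)) ^ mY / (2 * C ^ mX * Real.Gamma mX * γbar)) *
    (γ / γbar) ^ (α * mX / 2 - 1) * Real.exp (-(1 / C) * (γ / γbar) ^ (α / 2)) *
    oneF1 mY mX ((mX * ΩY / (mY * ΩX + mX * ΩY)) / C * (γ / γbar) ^ (α / 2))

/-!
Expand `₁F₁` into its power series and integrate term by term (all terms are nonnegative).
After the substitution `γ = γ̄ u`, the `n`-th term is a generalized Gamma integral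
`∫ u^(q + p n - 1) exp(-u^p / C) du = C^(q/p + n) Γ(q/p + n) / p` with `p = α/2`,
`q = k + α m_X / 2`, and `Γ(q/p + n) = (q/p)_n Γ(q/p)` turns the resulting series into
`₂F₁(m_Y, q/p; m_X; δ)`, which converges by the ratio test because `δ < 1`.
-/

open Filter

lemma poch_pos {q : ℝ} (hq : 0 < q) (n : ℕ) : 0 < poch q n :=
  Finset.prod_pos fun _ _ => by positivity

lemma poch_succ (q : ℝ) (n : ℕ) : poch q (n + 1) = poch q n * (q + n) :=
  Finset.prod_range_succ _ _

lemma Gamma_add_nat_eq_poch_mul {s : ℝ} (hs : 0 < s) (n : ℕ) :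
    Gamma (s + n) = poch s n * Gamma s := by
  induction n with
  | zero => simp [poch]
  | succ n ih =>
    rw [Nat.cast_succ, ← add_assoc, Gamma_add_one (by positivity), ih, poch_succ]
    ring

lemma summable_twoF1_series {a b c z : ℝ} (ha : 0 < a) (hb : 0 < b) (hc : 0 < c)
    (hz : 0 < z) (hz1 : z < 1) :
    Summable fun n : ℕ => poch a n * poch b n / poch c n * z ^ n / n.factorial := by
  have hpos : ∀ n : ℕ, 0 < poch a n * poch b n / poch c n * z ^ n / n.factorial := fun n => by
    have := poch_pos ha n; have := poch_pos hb n; have := poch_pos hc n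
    positivity
  refine summable_of_ratio_test_tendsto_lt_one hz1
    (Eventually.of_forall fun n => (hpos n).ne') ?_
  have hratio : ∀ n : ℕ,
      z * ((a + 1 * n) / (1 + 1 * n)) * ((b + 1 * n) / (c + 1 * n)) =
        ‖poch a (n + 1) * poch b (n + 1) / poch c (n + 1) * z ^ (n + 1) / (n + 1).factorial‖ /
          ‖poch a n * poch b n / poch c n * z ^ n / n.factorial‖ := fun n => by
    rw [norm_of_nonneg (hpos _).le, norm_of_nonneg (hpos _).le]
    simp only [poch_succ, pow_succ, Nat.factorial_succ, Nat.cast_mul, Nat.cast_succ]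
    have := (poch_pos ha n).ne'; have := (poch_pos hb n).ne'; have := (poch_pos hc n).ne'
    field_simp
    ring
  refine Tendsto.congr hratio ?_
  simpa using ((tendsto_add_mul_div_add_mul_atTop_nhds a 1 1 one_ne_zero).const_mul z).mul
    (tendsto_add_mul_div_add_mul_atTop_nhds b c 1 one_ne_zero)

lemma integral_tsum_of_nonneg {α ι : Type*} [MeasurableSpace α] [Countable ι] {μ : Measure α}
    {F : ι → α → ℝ} (hF : ∀ i, Integrable (F i) μ) (hF0 : ∀ i, 0 ≤ᵐ[μ] F i)
    (hsum : Summable fun i => ∫ x, F i x ∂μ) :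
    ∫ x, ∑' i, F i x ∂μ = ∑' i, ∫ x, F i x ∂μ := by
  refine (integral_tsum_of_summable_integral_norm hF (hsum.congr fun i => ?_)).symm
  exact integral_congr_ae <| (hF0 i).mono fun x hx => (norm_of_nonneg hx).symm

lemma integral_rpow_sub_one_mul_exp_neg_div_mul_rpow {p q C : ℝ} (hp : 0 < p) (hq : 0 < q)
    (hC : 0 < C) :
    ∫ x in Ioi (0 : ℝ), x ^ (q - 1) * exp (-(1 / C) * x ^ p) =
      C ^ (q / p) / p * Gamma (q / p) := by
  rw [integral_rpow_mul_exp_neg_mul_rpow hp (by linarith) (by positivity), sub_add_cancel,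
    one_div C, inv_rpow hC.le, ← rpow_neg hC.le, neg_div, neg_neg]
  ring

theorem integral_rpow_mul_exp_mul_oneF1 {a c p q C δ : ℝ} (ha : 0 < a) (hc : 0 < c)
    (hp : 0 < p) (hq : 0 < q) (hC : 0 < C) (hδ : 0 < δ) (hδ1 : δ < 1) :
    ∫ x in Ioi (0 : ℝ), x ^ (q - 1) * exp (-(1 / C) * x ^ p) * oneF1 a c (δ / C * x ^ p) =
      C ^ (q / p) / p * Gamma (q / p) * twoF1 a (q / p) c δ := by
  set coeff : ℕ → ℝ := fun n => poch a n / poch c n * (δ / C) ^ n / n.factorial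
  set term : ℕ → ℝ → ℝ :=
    fun n x => coeff n * (x ^ (q + p * n - 1) * exp (-(1 / C) * x ^ p))
  have hcoeff : ∀ n, 0 < coeff n := fun n => by
    have := poch_pos ha n; have := poch_pos hc n
    positivity
  have hexpand : ∀ x ∈ Ioi (0 : ℝ),
      x ^ (q - 1) * exp (-(1 / C) * x ^ p) * oneF1 a c (δ / C * x ^ p) = ∑' n, term n x := by
    intro x hx
    rw [oneF1, ← tsum_mul_left]
    refine tsum_congr fun n => ?_
    have hpow : x ^ (q - 1) * (x ^ p) ^ n = x ^ (q + p * n - 1) := by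
      rw [← rpow_natCast, ← rpow_mul hx.le, ← rpow_add hx]
      ring_nf
    simp only [term, coeff, mul_pow, ← hpow]
    ring
  have hintegral : ∀ n, ∫ x in Ioi (0 : ℝ), term n x =
      C ^ (q / p) / p * Gamma (q / p) *
        (poch a n * poch (q / p) n / poch c n * δ ^ n / n.factorial) := by
    intro n
    have hqn : (q + p * n) / p = q / p + n := by field_simp
    rw [integral_const_mul, integral_rpow_sub_one_mul_exp_neg_div_mul_rpow hp (by positivity) hC,
      hqn, Gamma_add_nat_eq_poch_mul (by positivity), rpow_add hC, rpow_natCast]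
    have := (poch_pos hc n).ne'
    simp only [coeff, div_pow]
    field_simp
  have hint : ∀ n, IntegrableOn (term n) (Ioi 0) := fun n =>
    (integrableOn_rpow_mul_exp_neg_mul_rpow (by nlinarith [(n.cast_nonneg : (0 : ℝ) ≤ n)]) hp
      (by positivity)).const_mul _
  have hnonneg : ∀ n, 0 ≤ᵐ[volume.restrict (Ioi 0)] term n := fun n =>
    ae_restrict_of_forall_mem measurableSet_Ioi fun x (hx : 0 < x) => by
      have := hcoeff n
      positivity
  rw [setIntegral_congr_fun measurableSet_Ioi hexpand,
    integral_tsum_of_nonneg hint hnonneg, tsum_congr hintegral, tsum_mul_left, twoF1]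
  exact ((summable_twoF1_series ha (div_pos hq hp) hc hδ hδ1).mul_left _).congr
    fun n => (hintegral n).symm

lemma rpow_mul_aBXpdf {mX mY ΩX ΩY α γbar C γ : ℝ} (hγbar : 0 < γbar) (hγ : 0 < γ)
    (k : ℝ) :
    γ ^ k * aBXpdf mX mY ΩX ΩY α γbar C γ =
      α * (mY * ΩX / (mY * ΩX + mX * ΩY)) ^ mY / (2 * C ^ mX * Gamma mX * γbar) * γbar ^ k *
        ((γbar⁻¹ * γ) ^ (k + α * mX / 2 - 1) * exp (-(1 / C) * (γbar⁻¹ * γ) ^ (α / 2)) *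
          oneF1 mY mX (mX * ΩY / (mY * ΩX + mX * ΩY) / C * (γbar⁻¹ * γ) ^ (α / 2))) := by
  rw [aBXpdf, ← div_eq_inv_mul, add_sub_assoc, rpow_add (by positivity),
    div_rpow hγ.le hγbar.le k]
  field_simp

/-- Raw moments of the α-Beaulieu-Xie shadowed SNR density with an arbitrary
normalizing constant `C`. -/
theorem statement_3 (mX mY ΩX ΩY α γbar C : ℝ) (hmX : 0 < mX) (hmY : 0 < mY)
    (hΩX : 0 < ΩX) (hΩY : 0 < ΩY) (hα : 0 < α) (hγbar : 0 < γbar) (hC : 0 < C)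
    (k : ℝ) (hk : 0 ≤ k) :
    ∫ γ in Set.Ioi (0 : ℝ), γ ^ k * aBXpdf mX mY ΩX ΩY α γbar C γ
      = γbar ^ k * C ^ (2 * k / α) * (Real.Gamma (mX + 2 * k / α) / Real.Gamma mX) *
        (mY * ΩX / (mY * ΩX + mX * ΩY)) ^ mY *
        twoF1 mY (mX + 2 * k / α) mX (mX * ΩY / (mY * ΩX + mX * ΩY)) := by
  set δ := mX * ΩY / (mY * ΩX + mX * ΩY)
  have hδ : 0 < δ := by positivity
  have hδ1 : δ < 1 := (div_lt_one (by positivity)).2 (by nlinarith [mul_pos hmY hΩX])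
  have hq : 0 < k + α * mX / 2 := by positivity
  have hqp : (k + α * mX / 2) / (α / 2) = mX + 2 * k / α := by field_simp; ring
  rw [setIntegral_congr_fun measurableSet_Ioi fun γ hγ => rpow_mul_aBXpdf hγbar hγ k,
    integral_const_mul, integral_comp_mul_left_Ioi (fun u => u ^ (k + α * mX / 2 - 1) *
      exp (-(1 / C) * u ^ (α / 2)) * oneF1 mY mX (δ / C * u ^ (α / 2))) 0 (inv_pos.2 hγbar),
    mul_zero, integral_rpow_mul_exp_mul_oneF1 hmY hmX (half_pos hα) hq hC hδ hδ1, hqp,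
    smul_eq_mul, inv_inv, rpow_add hC]
  have := (Gamma_pos_of_pos hmX).ne'
  field_simp
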